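/- Consider the control-affine system ẋ = f(x) + g(x)u on ℝⁿ with control u ∈ ℝ^q, where f : ℝⁿ → ℝⁿ and g(x) : ℝ^q → ℝⁿ is linear for each x. Let b : ℝⁿ → ℝ be twice differentiable with relative degree two, i.e. Db(y)[g(y)w] = 0 for all y ∈ ℝⁿ and all w ∈ ℝ^q. Let α₁, α₂, α_f : ℝ → ℝ be extended class K functions and define ψ₁(y) = Db(y)[f(y)] + α₁(b(y)); assume ψ₁ is differentiable and Dψ₁(y)[g(y)e_i] ≤ 0 for every y and every standard basis vector e_i. Let u_min ≤ u_max in ℝ^q (componentwise) and define b_hF(y) = Dψ₁(y)[f(y) + g(y)u_min] + α₂(ψ₁(y)). Let x : ℝ → ℝⁿ and u : ℝ → ℝ^q satisfy x'(t) = f(x(t)) + g(x(t))u(t) for all t ≥ 0, and suppose t ↦ b_hF(x(t)) is differentiable with (d/dt) b_hF(x(t)) + α_f(b_hF(x(t))) ≥ 0 for all t ≥ 0. If b_hF(x(0)) ≥ 0, then for every t ≥ 0 there exists u' ∈ ℝ^q with u_min ≤ u' ≤ u_max componentwise and Dψ₁(x(t))[f(x(t)) + g(x(t))u'] + α₂(ψ₁(x(t)))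 ≥ 0; that is, the second-order HOCBF constraint and the control bounds are conflict-free along the whole trajectory. -/

import Mathlib

/-!
The witness is `u_min`: the HOCBF constraint at `u = u_min` reads exactly `b_hF(x(t)) ≥ 0`.
That inequality persists along the trajectory because `b_hF(x(0)) ≥ 0` and the CBF condition
`ḃ_hF + α_f(b_hF) ≥ 0` makes `b_hF(x(·))` strictly increasing wherever it is negative, so it
can never fall below zero.
-/

open Set

theorem nonneg_of_deriv_pos_of_neg {h : ℝ → ℝ} {a b : ℝ} (hab : a ≤ b)
    (hcont : ContinuousOn h (Icc a b)) (ha : 0 ≤ h a)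
    (hderiv : ∀ s ∈ Ioo a b, h s < 0 → 0 < deriv h s) : 0 ≤ h b := by
  have hclosed : IsClosed (h ⁻¹' Ici 0 ∩ Icc a b) := by
    rw [inter_comm]
    exact hcont.preimage_isClosed_of_isClosed isClosed_Icc isClosed_Ici
  -- Real induction: were `h < 0` on all of `(s, b]`, `h` would increase strictly on `[s, b]`.
  refine hclosed.mem_of_ge_of_forall_exists_gt ha hab fun s ⟨hs_mem, hs⟩ => ?_
  by_contra hempty
  have hneg : ∀ r ∈ Ioc s b, h r < 0 := fun r hr => not_le.mp fun hr' => hempty ⟨r, hr', hr⟩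
  have hmono : StrictMonoOn h (Icc s b) := by
    refine strictMonoOn_of_deriv_pos (convex_Icc s b)
      (hcont.mono (Icc_subset_Icc_left hs.1)) fun r hr => ?_
    rw [interior_Icc] at hr
    exact hderiv r ⟨hs.1.trans_lt hr.1, hr.2⟩ (hneg r (Ioo_subset_Ioc_self hr))
  have hsb : h s < h b := hmono (left_mem_Icc.mpr hs.2.le) (right_mem_Icc.mpr hs.2.le) hs.2
  have hs_nonneg : 0 ≤ h s := hs_mem
  linarith [hneg b (right_mem_Ioc.mpr hs.2)]

theorem nonneg_of_deriv_add_nonneg {h φ : ℝ → ℝ} {a : ℝ} (hφ : ∀ y < 0, φ y < 0)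
    (hdiff : ∀ t, a ≤ t → DifferentiableAt ℝ h t)
    (hcbf : ∀ t, a ≤ t → deriv h t + φ (h t) ≥ 0) (ha : 0 ≤ h a) :
    ∀ t, a ≤ t → 0 ≤ h t := fun t ht =>
  nonneg_of_deriv_pos_of_neg ht
    (fun s hs => (hdiff s hs.1).continuousAt.continuousWithinAt) ha
    fun s hs hneg => by linarith [hcbf s hs.1.le, hφ _ hneg]

theorem feasibility_cbf_keeps_qp_feasible_relative_degree_two_general
    (n q : ℕ)
    (f : (Fin n → ℝ) → (Fin n → ℝ))
    (g : (Fin n → ℝ) → ((Fin q → ℝ) →ₗ[ℝ] (Fin n → ℝ)))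
    (α₂ αf : ℝ → ℝ)
    (hαf_mono : StrictMono αf) (hαf0 : αf 0 = 0)
    (ψ₁ : (Fin n → ℝ) → ℝ)
    (uMin uMax : Fin q → ℝ) (hbounds : ∀ i, uMin i ≤ uMax i)
    (bhF : (Fin n → ℝ) → ℝ)
    (hbhF_def : ∀ y : Fin n → ℝ,
      bhF y = fderiv ℝ ψ₁ y (f y + g y uMin) + α₂ (ψ₁ y))
    (x : ℝ → (Fin n → ℝ))
    (hbhFx_diff : ∀ t : ℝ, 0 ≤ t → DifferentiableAt ℝ (fun s => bhF (x s)) t)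
    (hbhFx_cbf : ∀ t : ℝ, 0 ≤ t →
      deriv (fun s => bhF (x s)) t + αf (bhF (x t)) ≥ 0)
    (hbhF0 : 0 ≤ bhF (x 0)) :
    ∀ t : ℝ, 0 ≤ t → ∃ u' : Fin q → ℝ,
      (∀ i, uMin i ≤ u' i) ∧ (∀ i, u' i ≤ uMax i) ∧
      fderiv ℝ ψ₁ (x t) (f (x t) + g (x t) u') + α₂ (ψ₁ (x t)) ≥ 0 := by
  intro t ht
  refine ⟨uMin, fun _ => le_rfl, hbounds, ?_⟩
  rw [← hbhF_def]
  have hαf_neg : ∀ y < 0, αf y < 0 := fun y hy => hαf0 ▸ hαf_mono hy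
  exact nonneg_of_deriv_add_nonneg hαf_neg hbhFx_diff hbhFx_cbf hbhF0 t ht

/-- Theorem 4 instantiated with relative degree `m = 2`: along a trajectory on
which a CBF constraint enforcing the feasibility constraint `b_hF(x) ≥ 0` is
satisfied, and with `b_hF(x(0)) ≥ 0`, the second-order HOCBF constraint and
the control bounds are conflict-free along the whole trajectory. -/
theorem feasibility_cbf_keeps_qp_feasible_relative_degree_two
    (n q : ℕ)
    (f : (Fin n → ℝ) → (Fin n → ℝ))
    (g : (Fin n → ℝ) → ((Fin q → ℝ) →ₗ[ℝ] (Fin n → ℝ)))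
    (b : (Fin n → ℝ) → ℝ) (hb : Differentiable ℝ b)
    -- relative degree two: the control does not appear at first order
    (hrel2 : ∀ (y : Fin n → ℝ) (w : Fin q → ℝ), fderiv ℝ b y (g y w) = 0)
    (α₁ α₂ αf : ℝ → ℝ)
    (hα₁_mono : StrictMono α₁) (hα₁0 : α₁ 0 = 0)
    (hα₂_mono : StrictMono α₂) (hα₂0 : α₂ 0 = 0)
    (hαf_mono : StrictMono αf) (hαf0 : αf 0 = 0)
    (ψ₁ : (Fin n → ℝ) → ℝ)
    (hψ₁_def : ∀ y : Fin n → ℝ, ψ₁ y = fderiv ℝ b y (f y) + α₁ (b y))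
    (hψ₁ : Differentiable ℝ ψ₁)
    (hLgψ₁_nonpos : ∀ y : Fin n → ℝ, ∀ i : Fin q,
      fderiv ℝ ψ₁ y (g y (Pi.single i 1)) ≤ 0)
    (uMin uMax : Fin q → ℝ) (hbounds : ∀ i, uMin i ≤ uMax i)
    (bhF : (Fin n → ℝ) → ℝ)
    (hbhF_def : ∀ y : Fin n → ℝ,
      bhF y = fderiv ℝ ψ₁ y (f y + g y uMin) + α₂ (ψ₁ y))
    (x : ℝ → (Fin n → ℝ)) (u : ℝ → (Fin q → ℝ))
    (hx : ∀ t : ℝ, 0 ≤ t → HasDerivAt x (f (x t) + g (x t) (u t)) t)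
    (hbhFx_diff : ∀ t : ℝ, 0 ≤ t → DifferentiableAt ℝ (fun s => bhF (x s)) t)
    (hbhFx_cbf : ∀ t : ℝ, 0 ≤ t →
      deriv (fun s => bhF (x s)) t + αf (bhF (x t)) ≥ 0)
    (hbhF0 : 0 ≤ bhF (x 0)) :
    ∀ t : ℝ, 0 ≤ t → ∃ u' : Fin q → ℝ,
      (∀ i, uMin i ≤ u' i) ∧ (∀ i, u' i ≤ uMax i) ∧
      fderiv ℝ ψ₁ (x t) (f (x t) + g (x t) u') + α₂ (ψ₁ (x t)) ≥ 0 :=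
  feasibility_cbf_keeps_qp_feasible_relative_degree_two_general n q f g α₂ αf hαf_mono hαf0 ψ₁ uMin
    uMax hbounds bhF hbhF_def x hbhFx_diff hbhFx_cbf hbhF0
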